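/- Let $(X,Y,U)$ be finitely supported random variables such that $X$ is independent of $U$ and $H(Y \mid X, U) = 0$. Suppose further that $X$ is binary. Then $H(Y \mid U) \geq (1 - \sum_y \min_x P(Y=y \mid X=x)) \cdot H(X)$. -/
import Mathlib


open Finset

/-- Shannon entropy (base 2) of a pmf on a finite alphabet. -/
noncomputable def ent {α : Type*} [Fintype α] (p : α → ℝ) : ℝ :=
  ∑ a, -(p a * Real.logb 2 (p a))

lemma aux_nonneg {g s : ℝ} (hg : 0 ≤ g) (hgs : g ≤ s) :
    0 ≤ g * Real.logb 2 s - g * Real.logb 2 g := by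
  rcases eq_or_lt_of_le hg with h | h
  · simp [← h]
  · have := Real.logb_le_logb_of_le (one_lt_two) h hgs
    nlinarith

lemma aux_eq {g s : ℝ} (hg : 0 ≤ g) (hgs : g ≤ s)
    (h : g * Real.logb 2 s - g * Real.logb 2 g = 0) : g = 0 ∨ g = s := by
  rcases eq_or_lt_of_le hg with h0 | h0
  · exact Or.inl h0.symm
  · right
    by_contra hne
    have hlt : g < s := lt_of_le_of_ne hgs hne
    have := Real.logb_lt_logb (one_lt_two) h0 hlt
    nlinarith

/-- For binary `X` with `X ⟂ U` and `H(Y|X,U) = 0`,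
`H(Y|U) ≥ (1 - ∑_y min_x P(y|x)) · H(X)`. -/
theorem stmt7 {β γ : Type*} [Fintype β] [Fintype γ]
    (p : Fin 2 × β × γ → ℝ) (hnn : ∀ w, 0 ≤ p w) (hsum : ∑ w, p w = 1)
    (hX : ∀ x : Fin 2, 0 < ∑ y, ∑ u, p (x, y, u))
    (hindep : ∀ (x : Fin 2) (u : γ),
      (∑ y, p (x, y, u)) = (∑ y, ∑ u', p (x, y, u')) * (∑ x', ∑ y, p (x', y, u)))
    (hfun : ent p - ent (fun w : Fin 2 × γ => ∑ y, p (w.1, y, w.2)) = 0) :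
    (1 - ∑ y : β, Finset.univ.inf' Finset.univ_nonempty
          (fun x : Fin 2 => (∑ u, p (x, y, u)) / (∑ y', ∑ u, p (x, y', u))))
        * ent (fun x : Fin 2 => ∑ y, ∑ u, p (x, y, u))
      ≤ ent (fun w : β × γ => ∑ x, p (x, w.1, w.2))
          - ent (fun u : γ => ∑ x, ∑ y, p (x, y, u)) := by
  classical
  set A : Fin 2 → ℝ := fun x => ∑ y, ∑ u, p (x, y, u) with hA_def
  set C : γ → ℝ := fun u => ∑ x, ∑ y, p (x, y, u) with hC_def
  have hApos : ∀ x, 0 < A x := hX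
  have hCnn : ∀ u, 0 ≤ C u :=
    fun u => Finset.sum_nonneg fun x _ => Finset.sum_nonneg fun y _ => hnn _
  have hqs : ∀ (x : Fin 2) (u : γ), ∑ y, p (x, y, u) = A x * C u := hindep
  have key1 : ∑ x, ∑ y, ∑ u, p (x, y, u) = 1 := by
    simpa [Fintype.sum_prod_type] using hsum
  have hA_sum : ∑ x, A x = 1 := key1
  have hC_sum : ∑ u, C u = 1 := by
    have h : ∑ u, C u = ∑ x, ∑ y, ∑ u, p (x, y, u) := by
      show ∑ u, ∑ x, ∑ y, p (x, y, u) = _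
      rw [Finset.sum_comm]
      exact Finset.sum_congr rfl fun x _ => Finset.sum_comm
    rw [h, key1]
  -- Step 1: determinism
  have hle : ∀ x y u, p (x, y, u) ≤ A x * C u := by
    intro x y u
    rw [← hqs x u]
    exact Finset.single_le_sum (f := fun y => p (x, y, u)) (fun y _ => hnn _) (Finset.mem_univ y)
  have key0 : ∑ w : Fin 2 × β × γ,
      (p w * Real.logb 2 (A w.1 * C w.2.2) - p w * Real.logb 2 (p w)) = 0 := by
    rw [Finset.sum_sub_distrib]
    have e1 : ∑ w : Fin 2 × β × γ, p w * Real.logb 2 (A w.1 * C w.2.2)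
        = ∑ x, ∑ u, (A x * C u) * Real.logb 2 (A x * C u) := by
      simp only [Fintype.sum_prod_type]
      refine Finset.sum_congr rfl fun x _ => ?_
      rw [Finset.sum_comm]
      refine Finset.sum_congr rfl fun u _ => ?_
      rw [← Finset.sum_mul, hqs x u]
    have e2 : ∑ w : Fin 2 × β × γ, p w * Real.logb 2 (p w) = - ent p := by
      simp only [ent, Finset.sum_neg_distrib, neg_neg]
    have e3 : ent (fun w : Fin 2 × γ => ∑ y, p (w.1, y, w.2))
        = - ∑ x, ∑ u, (A x * C u) * Real.logb 2 (A x * C u) := by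
      simp only [ent, Fintype.sum_prod_type]
      rw [← Finset.sum_neg_distrib]
      refine Finset.sum_congr rfl fun x _ => ?_
      rw [← Finset.sum_neg_distrib]
      exact Finset.sum_congr rfl fun u _ => by rw [hqs x u]
    rw [e1, e2]
    have := hfun
    rw [e3] at this
    linarith
  have hdet : ∀ x y u, p (x, y, u) = 0 ∨ p (x, y, u) = A x * C u := by
    have heach := (Finset.sum_eq_zero_iff_of_nonneg
      (fun w _ => aux_nonneg (hnn w) (hle w.1 w.2.1 w.2.2))).mp key0
    intro x y u
    exact aux_eq (hnn _) (hle x y u) (heach (x, y, u) (Finset.mem_univ _))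
  -- Step 2: define f
  have hβ : Nonempty β := by
    by_contra h
    rw [not_nonempty_iff] at h
    exact absurd hsum (by simp)
  have hCz : ∀ u, ¬ (0 < C u) → C u = 0 := fun u h => le_antisymm (not_lt.mp h) (hCnn u)
  have hex : ∀ x u, ∃ y, 0 < C u → p (x, y, u) = A x * C u := by
    intro x u
    by_cases hc : 0 < C u
    · by_contra hno
      push_neg at hno
      have hz : ∑ y, p (x, y, u) = 0 := Finset.sum_eq_zero fun y _ => by
        rcases hdet x y u with h | h
        · exact h
        · exact absurd h ((hno y).2)
      rw [hqs x u] at hz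
      nlinarith [hApos x]
    · exact ⟨Classical.arbitrary β, fun h => absurd h hc⟩
  choose f hf using hex
  have hp : ∀ x y u, p (x, y, u) = if f x u = y then A x * C u else 0 := by
    intro x y u
    by_cases hc : 0 < C u
    · by_cases hy : f x u = y
      · rw [if_pos hy, ← hy]
        exact hf x u hc
      · rw [if_neg hy]
        rcases hdet x y u with h | h
        · exact h
        · exfalso
          have hub : p (x, y, u) + p (x, f x u, u) ≤ ∑ y', p (x, y', u) := by
            have h1 : p (x, y, u) + p (x, f x u, u)
                = ∑ y' ∈ ({y, f x u} : Finset β), p (x, y', u) :=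
              (Finset.sum_pair (f := fun y' => p (x, y', u)) (fun h' => hy h'.symm)).symm
            rw [h1]
            exact Finset.sum_le_sum_of_subset_of_nonneg (Finset.subset_univ _)
              (fun i _ _ => hnn _)
          rw [hqs x u, h, hf x u hc] at hub
          nlinarith [hApos x]
    · have hc0 : C u = 0 := hCz u hc
      have hz : p (x, y, u) = 0 := by
        have h1 := hle x y u
        rw [hc0, mul_zero] at h1
        exact le_antisymm h1 (hnn _)
      rw [hz, hc0, mul_zero, ite_self]
  -- entropy of A is nonneg
  have hAle1 : ∀ x, A x ≤ 1 := by
    intro x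
    rw [← hA_sum]
    exact Finset.single_le_sum (fun x _ => (hApos x).le) (Finset.mem_univ x)
  have hE : 0 ≤ ent A := by
    simp only [ent]
    refine Finset.sum_nonneg fun x _ => ?_
    have hl : Real.logb 2 (A x) ≤ 0 := Real.logb_nonpos one_lt_two (hApos x).le (hAle1 x)
    nlinarith [hApos x]
  -- the marginal of (Y,U)
  have hr : ∀ y u, ∑ x, p (x, y, u)
      = (if f 0 u = y then A 0 * C u else 0) + (if f 1 u = y then A 1 * C u else 0) := by
    intro y u
    rw [Fin.sum_univ_two, hp 0 y u, hp 1 y u]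
  have hA01 : A 0 + A 1 = 1 := by rw [← Fin.sum_univ_two A]; exact hA_sum
  have hGu : ∀ u, ∑ y, -((∑ x, p (x, y, u)) * Real.logb 2 (∑ x, p (x, y, u)))
      = -(C u * Real.logb 2 (C u)) + (if f 0 u = f 1 u then 0 else C u * ent A) := by
    intro u
    by_cases hc : 0 < C u
    · by_cases hff : f 0 u = f 1 u
      · rw [if_pos hff, add_zero]
        have hr' : ∀ y, (∑ x, p (x, y, u)) = if f 0 u = y then C u else 0 := by
          intro y
          rw [hr y u, ← hff]
          by_cases h : f 0 u = y
          · rw [if_pos h, if_pos h, ← add_mul, hA01, one_mul, if_pos h]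
          · rw [if_neg h, if_neg h, add_zero, if_neg h]
        calc ∑ y, -((∑ x, p (x, y, u)) * Real.logb 2 (∑ x, p (x, y, u)))
            = ∑ y, -((if f 0 u = y then C u else 0)
                * Real.logb 2 (if f 0 u = y then C u else 0)) :=
              Finset.sum_congr rfl fun y _ => by rw [hr' y]
          _ = -(C u * Real.logb 2 (C u)) := by
              rw [Finset.sum_eq_single (f 0 u)
                (fun b _ hb => by rw [if_neg (fun h => hb h.symm)]; simp)
                (fun h => absurd (Finset.mem_univ _) h)]
              rw [if_pos rfl]
      · rw [if_neg hff]
        have hz : ∀ y ∈ (Finset.univ : Finset β), y ∉ ({f 0 u, f 1 u} : Finset β) →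
            -((∑ x, p (x, y, u)) * Real.logb 2 (∑ x, p (x, y, u))) = 0 := by
          intro y _ hy
          simp only [Finset.mem_insert, Finset.mem_singleton, not_or] at hy
          rw [hr y u, if_neg (fun h => hy.1 h.symm), if_neg (fun h => hy.2 h.symm)]
          simp
        have hpair : ∑ y, -((∑ x, p (x, y, u)) * Real.logb 2 (∑ x, p (x, y, u)))
            = -((A 0 * C u) * Real.logb 2 (A 0 * C u))
              + -((A 1 * C u) * Real.logb 2 (A 1 * C u)) := by
          rw [← Finset.sum_subset (Finset.subset_univ ({f 0 u, f 1 u} : Finset β)) hz,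
            Finset.sum_pair hff, hr (f 0 u) u, hr (f 1 u) u,
            if_pos rfl, if_neg (fun h => hff h.symm), if_neg hff, if_pos rfl,
            add_zero, zero_add]
        rw [hpair, Real.logb_mul (ne_of_gt (hApos 0)) (ne_of_gt hc),
          Real.logb_mul (ne_of_gt (hApos 1)) (ne_of_gt hc)]
        simp only [ent, Fin.sum_univ_two]
        linear_combination (-(C u * Real.logb 2 (C u))) * hA01
    · have hc0 : C u = 0 := hCz u hc
      have hz : ∀ y, (∑ x, p (x, y, u)) = 0 := by
        intro y
        rw [hr y u, hc0]
        simp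
      simp [hz, hc0]
  -- RHS computation
  have hRHS : ent (fun w : β × γ => ∑ x, p (x, w.1, w.2)) - ent C
      = (∑ u, if f 0 u = f 1 u then 0 else C u) * ent A := by
    have h1 : ent (fun w : β × γ => ∑ x, p (x, w.1, w.2))
        = ∑ u, ∑ y, -((∑ x, p (x, y, u)) * Real.logb 2 (∑ x, p (x, y, u))) := by
      simp only [ent, Fintype.sum_prod_type]
      exact Finset.sum_comm
    have h3 : ent C = ∑ u, -(C u * Real.logb 2 (C u)) := by simp only [ent]
    have h4 : ∑ u, (if f 0 u = f 1 u then 0 else C u * ent A)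
        = (∑ u, if f 0 u = f 1 u then 0 else C u) * ent A := by
      rw [Finset.sum_mul]
      exact Finset.sum_congr rfl fun u _ => by split_ifs <;> simp
    rw [h1, Finset.sum_congr rfl fun u _ => hGu u, Finset.sum_add_distrib, h3, h4]
    ring
  rw [hRHS]
  -- LHS bound
  have hfrac : ∀ (x : Fin 2) (y : β),
      (∑ u, p (x, y, u)) / (∑ y', ∑ u, p (x, y', u))
        = ∑ u, if f x u = y then C u else 0 := by
    intro x y
    have e : (∑ y', ∑ u, p (x, y', u)) = A x := rfl
    have hnum : ∑ u, p (x, y, u) = A x * (∑ u, if f x u = y then C u else 0) := by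
      rw [Finset.mul_sum]
      exact Finset.sum_congr rfl fun u _ => by rw [hp x y u]; split_ifs <;> simp
    rw [e, hnum, mul_comm, mul_div_assoc, div_self (ne_of_gt (hApos x)), mul_one]
  have hSy : ∀ y : β, ∑ u, (if f 0 u = y ∧ f 1 u = y then C u else 0)
      ≤ Finset.univ.inf' Finset.univ_nonempty
          (fun x : Fin 2 => (∑ u, p (x, y, u)) / (∑ y', ∑ u, p (x, y', u))) := by
    intro y
    apply Finset.le_inf'
    intro x _
    rw [hfrac x y]
    refine Finset.sum_le_sum fun u _ => ?_
    split_ifs with h1 h2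
    · exact le_refl _
    · exfalso
      apply h2
      fin_cases x
      · exact h1.1
      · exact h1.2
    · exact hCnn u
    · exact le_refl _
  have hM : ∑ u, (if f 0 u = f 1 u then C u else 0)
      ≤ ∑ y : β, Finset.univ.inf' Finset.univ_nonempty
          (fun x : Fin 2 => (∑ u, p (x, y, u)) / (∑ y', ∑ u, p (x, y', u))) := by
    have h : ∑ u, (if f 0 u = f 1 u then C u else 0)
        = ∑ y, ∑ u, (if f 0 u = y ∧ f 1 u = y then C u else 0) := by
      rw [Finset.sum_comm]
      refine Finset.sum_congr rfl fun u _ => ?_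
      by_cases h : f 0 u = f 1 u
      · rw [if_pos h]
        rw [Finset.sum_eq_single (f 1 u)
          (fun b _ hb => if_neg (fun hc => hb hc.2.symm))
          (fun hh => absurd (Finset.mem_univ _) hh)]
        rw [if_pos ⟨h, rfl⟩]
      · rw [if_neg h]
        exact (Finset.sum_eq_zero fun y _ => if_neg (fun hc => h (hc.1.trans hc.2.symm))).symm
    rw [h]
    exact Finset.sum_le_sum fun y _ => hSy y
  have hsplit : ∑ u, (if f 0 u = f 1 u then C u else 0)
      + ∑ u, (if f 0 u = f 1 u then 0 else C u) = 1 := by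
    rw [← Finset.sum_add_distrib, ← hC_sum]
    exact Finset.sum_congr rfl fun u _ => by split_ifs <;> simp
  apply mul_le_mul_of_nonneg_right _ hE
  linarith [hM, hsplit]
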